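/- For every closed term t of a constructor rewrite system R, the tree term graph 𝔾(t) is constructor-shared; moreover, if a closed term graph G is constructor-shared and G rewrites in one step to I in the graph rewrite system corresponding to R, then I is constructor-shared. -/

import Mathlib

/-- First-order terms over a signature with constructors `C` and function symbols `F`,
with variables drawn from ℕ. -/
inductive GTerm (C F : Type) : Type
  | var : ℕ → GTerm C F
  | con : C → List (GTerm C F) → GTerm C F
  | fn : F → List (GTerm C F) → GTerm C F

namespace GTerm

variable {C F : Type}

/-- Constructor terms: built only from constructors. -/
inductive IsConTerm : GTerm C F → Prop
  | con {c ts} : (∀ t ∈ ts, IsConTerm t) → IsConTerm (con c ts)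

/-- Patterns: built from constructors and variables. -/
inductive IsPattern : GTerm C F → Prop
  | var {x} : IsPattern (var x)
  | con {c ts} : (∀ t ∈ ts, IsPattern t) → IsPattern (con c ts)

/-- Arity discipline: every symbol is applied to as many arguments as its arity. -/
inductive WFT (arc : C → ℕ) (arf : F → ℕ) : GTerm C F → Prop
  | var {x} : WFT arc arf (var x)
  | con {c ts} : ts.length = arc c → (∀ t ∈ ts, WFT arc arf t) → WFT arc arf (con c ts)
  | fn {f ts} : ts.length = arf f → (∀ t ∈ ts, WFT arc arf t) → WFT arc arf (fn f ts)

/-- The list of variable occurrences of a term, in left-to-right order. -/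
def varsL : GTerm C F → List ℕ
  | var x => [x]
  | con _ ts => ts.attach.flatMap (fun t => varsL t.1)
  | fn _ ts => ts.attach.flatMap (fun t => varsL t.1)
decreasing_by
  all_goals simp_wf
  all_goals have := List.sizeOf_lt_of_mem t.2
  all_goals omega

/-- Substitution of terms for variables. -/
def gsubst (σ : ℕ → Option (GTerm C F)) : GTerm C F → GTerm C F
  | var y => (σ y).getD (var y)
  | con c ts => con c (ts.attach.map (fun t => gsubst σ t.1))
  | fn f ts => fn f (ts.attach.map (fun t => gsubst σ t.1))
decreasing_by
  all_goals simp_wf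
  all_goals have := List.sizeOf_lt_of_mem t.2
  all_goals omega

end GTerm

/-- A constructor rewrite rule f(p₁,…,pₙ) → rhs. -/
structure GRule (C F : Type) where
  f : F
  args : List (GTerm C F)
  rhs : GTerm C F

/-- Well-formedness of a rule: the lhs arguments are patterns respecting the
arities, the lhs is linear, and the rhs is a well-formed term all of whose
variables occur in the lhs. -/
def GRule.WF {C F : Type} (arc : C → ℕ) (arf : F → ℕ) (r : GRule C F) : Prop :=
  (∀ p ∈ r.args, GTerm.IsPattern p) ∧
  r.args.length = arf r.f ∧
  (∀ p ∈ r.args, GTerm.WFT arc arf p) ∧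
  (r.args.flatMap GTerm.varsL).Nodup ∧
  GTerm.WFT arc arf r.rhs ∧
  (∀ x ∈ r.rhs.varsL, x ∈ r.args.flatMap GTerm.varsL)

/-- Non-overlapping rules: the left-hand sides of distinct rules cannot be
instantiated (by constructor terms) to a common term. -/
def NonOverlapping {C F : Type} (Rs : Set (GRule C F)) : Prop :=
  ∀ r₁ ∈ Rs, ∀ r₂ ∈ Rs, r₁ ≠ r₂ → r₁.f = r₂.f →
    ¬ ∃ σ τ : ℕ → Option (GTerm C F),
        (∀ x t, σ x = some t → GTerm.IsConTerm t) ∧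
        (∀ x t, τ x = some t → GTerm.IsConTerm t) ∧
        r₁.args.map (GTerm.gsubst σ) = r₂.args.map (GTerm.gsubst τ)

/-- An orthogonal constructor rewrite system. -/
def Orthogonal {C F : Type} (arc : C → ℕ) (arf : F → ℕ) (Rs : Set (GRule C F)) : Prop :=
  (∀ r ∈ Rs, GRule.WF arc arf r) ∧ NonOverlapping Rs

/-- One-step (call-by-value) rewriting: a rule instantiated by constructor terms
fires, closed under arbitrary contexts. -/
inductive XStep {C F : Type} (Rs : Set (GRule C F)) : GTerm C F → GTerm C F → Prop
  | root {r : GRule C F} {σ : ℕ → Option (GTerm C F)} :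
      r ∈ Rs → (∀ x t, σ x = some t → GTerm.IsConTerm t) →
      XStep Rs (GTerm.fn r.f (r.args.map (GTerm.gsubst σ))) (GTerm.gsubst σ r.rhs)
  | conCtx {c ts₁ t t' ts₂} : XStep Rs t t' →
      XStep Rs (GTerm.con c (ts₁ ++ t :: ts₂)) (GTerm.con c (ts₁ ++ t' :: ts₂))
  | fnCtx {f ts₁ t t' ts₂} : XStep Rs t t' →
      XStep Rs (GTerm.fn f (ts₁ ++ t :: ts₂)) (GTerm.fn f (ts₁ ++ t' :: ts₂))

/-- Normal forms of the rewrite system. -/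
def XNormal {C F : Type} (Rs : Set (GRule C F)) (t : GTerm C F) : Prop :=
  ¬ ∃ u, XStep Rs t u

/-- Closed terms: no variables. -/
def GClosed {C F : Type} (t : GTerm C F) : Prop := t.varsL = []

open scoped Classical

/-- A term graph over a signature with constructors `C` and function symbols `F`:
a finite set of vertices (natural numbers), a partial labelling, an ordered list of
successors for every vertex (empty for unlabelled vertices), and a root. -/
structure TGraph (C F : Type) where
  V : Finset ℕ
  lab : ℕ → Option (C ⊕ F)
  succ : ℕ → List ℕ
  root : ℕ

namespace TGraph

variable {C F : Type}

/-- The arity of a symbol. -/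
def arity (arc : C → ℕ) (arf : F → ℕ) : C ⊕ F → ℕ := Sum.elim arc arf

/-- The edge relation of a graph. -/
def edge (G : TGraph C F) (a b : ℕ) : Prop := a ∈ G.V ∧ b ∈ G.succ a

/-- Reachability in a graph. -/
def Reach (G : TGraph C F) (a b : ℕ) : Prop := Relation.ReflTransGen G.edge a b

/-- Well-formed graphs: the root is a vertex, edges stay inside the vertex set,
the out-degree of every vertex matches the arity of its label (0 if unlabelled),
and the graph is acyclic. -/
structure WFG (arc : C → ℕ) (arf : F → ℕ) (G : TGraph C F) : Prop where
  root_mem : G.root ∈ G.V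
  succ_mem : ∀ v ∈ G.V, ∀ w ∈ G.succ v, w ∈ G.V
  arity_ok : ∀ v ∈ G.V, (G.succ v).length = ((G.lab v).map (arity arc arf)).getD 0
  acyclic : ∀ v, ¬ Relation.TransGen G.edge v v

/-- A graph is closed if its labelling is total on vertices. -/
def ClosedG (G : TGraph C F) : Prop := ∀ v ∈ G.V, (G.lab v).isSome

/-- Follow a path (a list of child indices) from a vertex. -/
def follow (G : TGraph C F) : ℕ → List ℕ → Option ℕ
  | v, [] => some v
  | v, i :: is => (G.succ v)[i]?.bind (fun w => follow G w is)

/-- A graph is constructor-shared if every vertex reachable from the root by two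
distinct paths only reaches constructor-labelled vertices. -/
def ConstructorShared (G : TGraph C F) : Prop :=
  ∀ v (p q : List ℕ), follow G G.root p = some v → follow G G.root q = some v →
    p ≠ q → ∀ w, G.Reach v w → ∃ c, G.lab w = some (Sum.inl c)

/-- `Unfolds G v t`: the (closed) term `t` is the unfolding of the graph `G`
at vertex `v`. -/
inductive Unfolds (G : TGraph C F) : ℕ → GTerm C F → Prop
  | con {v : ℕ} {c : C} {ts : List (GTerm C F)} :
      G.lab v = some (Sum.inl c) → (G.succ v).length = ts.length →
      (∀ (j : ℕ) (h : j < ts.length), Unfolds G ((G.succ v).getD j 0) ts[j]) →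
      Unfolds G v (GTerm.con c ts)
  | fn {v : ℕ} {f : F} {ts : List (GTerm C F)} :
      G.lab v = some (Sum.inr f) → (G.succ v).length = ts.length →
      (∀ (j : ℕ) (h : j < ts.length), Unfolds G ((G.succ v).getD j 0) ts[j]) →
      Unfolds G v (GTerm.fn f ts)

/-- A homomorphism from the subgraph of `H` rooted at `l` into `G`. -/
def IsHom (H : TGraph C F) (l : ℕ) (G : TGraph C F) (φ : ℕ → ℕ) : Prop :=
  ∀ v, H.Reach l v → φ v ∈ G.V ∧
    ∀ a, H.lab v = some a →
      G.lab (φ v) = some a ∧ G.succ (φ v) = (H.succ v).map φ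

/-- A redex in `G` for a rule graph `(H, l, r)`: a homomorphism from the subgraph of
`H` rooted at `l` into `G` such that every path starting at the image of an
unlabelled (variable) node is a constructor path. -/
def IsRedex (H : TGraph C F) (l : ℕ) (G : TGraph C F) (φ : ℕ → ℕ) : Prop :=
  IsHom H l G φ ∧
  ∀ v, H.Reach l v → H.lab v = none →
    ∀ w, G.Reach (φ v) w → ∃ c, G.lab w = some (Sum.inl c)

/-- Firing a redex `(H, l, r, φ)` in `G`: the build phase copies the part of the
right-hand side subgraph not contained in the left-hand side subgraph (fresh
vertices are obtained by adding the offset `off`), the redirection phase redirects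
all edges pointing to `φ l` towards (the copy of) `r` and re-roots if necessary,
and the garbage-collection phase keeps only the vertices reachable from the new
root. -/
noncomputable def fire (G : TGraph C F) (H : TGraph C F) (l r : ℕ) (φ : ℕ → ℕ) :
    TGraph C F :=
  let off := G.V.sup id + 1
  let ψ : ℕ → ℕ := fun v => if H.Reach l v then φ v else v + off
  let tgt := ψ r
  let rd : ℕ → ℕ := fun w => if w = φ l then tgt else w
  let copies := (H.V.filter (fun v => H.Reach r v ∧ ¬ H.Reach l v)).image (· + off)
  let lab1 : ℕ → Option (C ⊕ F) :=
    fun v => if v ∈ copies then H.lab (v - off) else G.lab v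
  let succ1 : ℕ → List ℕ :=
    fun v => if v ∈ copies then ((H.succ (v - off)).map ψ).map rd
             else (G.succ v).map rd
  let root1 := rd G.root
  let V1 := G.V ∪ copies
  { V := V1.filter
      (fun v => Relation.ReflTransGen (fun a b => a ∈ V1 ∧ b ∈ succ1 a) root1 v),
    lab := lab1, succ := succ1, root := root1 }

end TGraph

/-- State of the tree-graph builder. -/
structure GB (C F : Type) where
  next : ℕ
  lab : ℕ → Option (C ⊕ F)
  succ : ℕ → List ℕ

mutual
/-- Build the tree of a term on top of a builder state, the (already allocated)
node `vm x` standing for the variable `x`; returns the root of the new tree. -/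
def buildT {C F : Type} (vm : ℕ → ℕ) : GTerm C F → GB C F → ℕ × GB C F
  | .var x, s => (vm x, s)
  | .con c ts, s =>
      let p := buildL vm ts s
      (p.2.next,
        ⟨p.2.next + 1,
         fun v => if v = p.2.next then some (Sum.inl c) else p.2.lab v,
         fun v => if v = p.2.next then p.1 else p.2.succ v⟩)
  | .fn f ts, s =>
      let p := buildL vm ts s
      (p.2.next,
        ⟨p.2.next + 1,
         fun v => if v = p.2.next then some (Sum.inr f) else p.2.lab v,
         fun v => if v = p.2.next then p.1 else p.2.succ v⟩)

def buildL {C F : Type} (vm : ℕ → ℕ) : List (GTerm C F) → GB C F → List ℕ × GB C F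
  | [], s => ([], s)
  | t :: ts, s =>
      let p := buildT vm t s
      let q := buildL vm ts p.2
      (p.1 :: q.1, q.2)
end

/-- The term graph of a term: one unlabelled node for each variable (shared), and
a fresh node for every other symbol occurrence.  For a closed term this is the
tree term graph 𝔾(t). -/
def graphOfTerm {C F : Type} (t : GTerm C F) : TGraph C F :=
  let vs := t.varsL.dedup
  let vm : ℕ → ℕ := fun x => vs.idxOf x
  let p := buildT vm t ⟨vs.length, fun _ => none, fun _ => []⟩
  { V := Finset.range p.2.next, lab := p.2.lab, succ := p.2.succ, root := p.1 }

/-- The graph rewrite rule corresponding to a term rewrite rule: the trees of the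
left- and right-hand sides, sharing the nodes representing the same variable.
Returns the rule graph together with its left and right roots. -/
def ruleGraph {C F : Type} (r : GRule C F) : TGraph C F × ℕ × ℕ :=
  let lhs : GTerm C F := GTerm.fn r.f r.args
  let vs := lhs.varsL.dedup
  let vm : ℕ → ℕ := fun x => vs.idxOf x
  let p := buildT vm lhs ⟨vs.length, fun _ => none, fun _ => []⟩
  let q := buildT vm r.rhs p.2
  ({ V := Finset.range q.2.next, lab := q.2.lab, succ := q.2.succ, root := p.1 },
   p.1, q.1)

/-- One-step graph rewriting in the graph rewrite system corresponding to the
rules `Rs`. -/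
inductive GStep {C F : Type} (Rs : Set (GRule C F)) : TGraph C F → TGraph C F → Prop
  | mk {G : TGraph C F} {r : GRule C F} {φ : ℕ → ℕ} :
      r ∈ Rs →
      TGraph.IsRedex (ruleGraph r).1 (ruleGraph r).2.1 G φ →
      GStep Rs G (TGraph.fire G (ruleGraph r).1 (ruleGraph r).2.1 (ruleGraph r).2.2 φ)

/-- Graph normal forms: no redex can be fired. -/
def GNormal {C F : Type} (Rs : Set (GRule C F)) (G : TGraph C F) : Prop :=
  ¬ ∃ I, GStep Rs G I

/-! A tree has exactly one path from the root to each node, so `𝔾(t)` is constructor-shared.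

For a step `G → I`, take a vertex `v` of `I` reached by two root paths and not heading a
constructor cone of `I`; the paths coincide, by induction on them. If `v` is a vertex of `G` or
the copy of the right root, both paths are root paths of `G`, to `v` or to the redex root `φ l`
respectively, because the copied right-hand side is entered from outside only at its root.
Constructor-sharedness of `G` then makes them equal: a constructor cone of `G` avoids `φ l` and
so survives the step, and `φ l` carries a function symbol. Any other `v` is a fresh copy inside
the right-hand side, which is a tree, so its parent and child index are unique and induction
applies. The leaves of that tree point to images of variables, which head constructor cones by
the redex condition. -/

namespace TGraph

variable {C F : Type}

def ConstructorCone (G : TGraph C F) (v : ℕ) : Prop :=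
  ∀ w, G.Reach v w → ∃ c, G.lab w = some (Sum.inl c)

theorem ConstructorCone.of_reach {G : TGraph C F} {v w : ℕ} (hv : G.ConstructorCone v)
    (hvw : G.Reach v w) : G.ConstructorCone w :=
  fun x hwx => hv x (hvw.trans hwx)

theorem ConstructorCone.of_succ {G : TGraph C F} {u w : ℕ} (hu : G.ConstructorCone u)
    (huV : u ∈ G.V) (hw : w ∈ G.succ u) : G.ConstructorCone w :=
  hu.of_reach (.single ⟨huV, hw⟩)

theorem le_of_reach {G : TGraph C F} (hdesc : ∀ a ∈ G.V, ∀ b ∈ G.succ a, b < a) {a b : ℕ}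
    (h : G.Reach a b) : b ≤ a := by
  induction h with
  | refl => exact le_rfl
  | tail _ hbc ih => exact (hdesc _ hbc.1 _ hbc.2).le.trans ih

theorem follow_append_singleton (G : TGraph C F) (v : ℕ) (p : List ℕ) (i : ℕ) :
    G.follow v (p ++ [i]) = (G.follow v p).bind fun u => (G.succ u)[i]? := by
  induction p generalizing v with
  | nil => cases (G.succ v)[i]? <;> simp [follow]
  | cons j p ih => simp [follow, ih, Option.bind_assoc]

theorem follow_append_singleton_eq_some {G : TGraph C F} {v w : ℕ} {p : List ℕ} {i : ℕ} :
    G.follow v (p ++ [i]) = some w ↔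
      ∃ u, G.follow v p = some u ∧ (G.succ u)[i]? = some w := by
  rw [follow_append_singleton, Option.bind_eq_some_iff]

theorem follow_mem {G : TGraph C F} (hsucc : ∀ v ∈ G.V, ∀ w ∈ G.succ v, w ∈ G.V) :
    ∀ {v w : ℕ} {p : List ℕ}, v ∈ G.V → G.follow v p = some w → w ∈ G.V
  | _, _, [], hv, h => by cases h; exact hv
  | v, w, i :: p, hv, h => by
    simp only [follow, Option.bind_eq_some_iff] at h
    obtain ⟨u, hu, hp⟩ := h
    exact follow_mem hsucc (hsucc v hv u (List.mem_of_getElem? hu)) hp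

/-- Proved by induction on root paths, the hypotheses handling their last edges. -/
theorem constructorShared_of_parents {G : TGraph C F} (hroot : G.root ∈ G.V)
    (hsucc : ∀ v ∈ G.V, ∀ w ∈ G.succ v, w ∈ G.V)
    (hparent_root : ∀ p u (i : ℕ), G.follow G.root p = some u → u ∈ G.V →
      (G.succ u)[i]? = some G.root → G.ConstructorCone G.root)
    (hparent : ∀ p q u₁ u₂ (i j : ℕ) v, G.follow G.root p = some u₁ →
      G.follow G.root q = some u₂ → u₁ ∈ G.V → u₂ ∈ G.V → (G.succ u₁)[i]? = some v →
      (G.succ u₂)[j]? = some v → ¬ G.ConstructorCone v → u₁ = u₂ ∧ i = j ∨ p ++ [i] = q ++ [j]) :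
    G.ConstructorShared := by
  suffices key : ∀ p q v, G.follow G.root p = some v → G.follow G.root q = some v →
      p = q ∨ G.ConstructorCone v from
    fun v p q hp hq hpq => (key p q v hp hq).resolve_left hpq
  intro p
  induction p using List.reverseRecOn with
  | nil =>
    intro q v hp hq
    cases hp
    rcases q.eq_nil_or_concat' with rfl | ⟨q, j, rfl⟩
    · exact .inl rfl
    obtain ⟨u, hu, hj⟩ := follow_append_singleton_eq_some.1 hq
    exact .inr (hparent_root q u j hu (follow_mem hsucc hroot hu) hj)
  | append_singleton p i ih =>
    intro q v hp hq
    obtain ⟨u₁, hu₁, hi⟩ := follow_append_singleton_eq_some.1 hp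
    have hu₁V := follow_mem hsucc hroot hu₁
    rcases q.eq_nil_or_concat' with rfl | ⟨q, j, rfl⟩
    · cases hq
      exact .inr (hparent_root p u₁ i hu₁ hu₁V hi)
    obtain ⟨u₂, hu₂, hj⟩ := follow_append_singleton_eq_some.1 hq
    by_cases hv : G.ConstructorCone v
    · exact .inr hv
    have hu₂V := follow_mem hsucc hroot hu₂
    refine .inl ((hparent p q u₁ u₂ i j v hu₁ hu₂ hu₁V hu₂V hi hj hv).elim ?_ id)
    rintro ⟨rfl, rfl⟩
    rcases ih q u₁ hu₁ hu₂ with rfl | hcone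
    · rfl
    · exact absurd (hcone.of_succ hu₁V (List.mem_of_getElem? hi)) hv

theorem constructorShared_of_isTree {G : TGraph C F} (hroot : G.root ∈ G.V)
    (hsucc : ∀ v ∈ G.V, ∀ w ∈ G.succ v, w ∈ G.V)
    (hroot_orphan : ∀ u ∈ G.V, G.root ∉ G.succ u)
    (hparent : ∀ u₁ ∈ G.V, ∀ u₂ ∈ G.V, ∀ (i j : ℕ) v, (G.succ u₁)[i]? = some v →
      (G.succ u₂)[j]? = some v → u₁ = u₂ ∧ i = j) :
    G.ConstructorShared :=
  constructorShared_of_parents hroot hsucc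
    (fun _ u _ _ hu hi => absurd (List.mem_of_getElem? hi) (hroot_orphan u hu))
    (fun _ _ u₁ u₂ _ _ _ _ _ hu₁ hu₂ hi hj _ =>
      .inl (hparent u₁ hu₁ u₂ hu₂ _ _ _ hi hj))

end TGraph

namespace GTerm

variable {C F : Type}

@[simp]
theorem varsL_var (x : ℕ) : (var x : GTerm C F).varsL = [x] := by
  rw [varsL]

@[simp]
theorem varsL_con (c : C) (ts : List (GTerm C F)) : (con c ts).varsL = ts.flatMap varsL := by
  rw [varsL]; simp [List.flatMap]

@[simp]
theorem varsL_fn (f : F) (ts : List (GTerm C F)) : (fn f ts).varsL = ts.flatMap varsL := by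
  rw [varsL]; simp [List.flatMap]

end GTerm

namespace GB

variable {C F : Type}

def graph (s : GB C F) (root : ℕ) : TGraph C F := ⟨Finset.range s.next, s.lab, s.succ, root⟩

def alloc (s : GB C F) (a : C ⊕ F) (cs : List ℕ) : GB C F :=
  ⟨s.next + 1, fun v => if v = s.next then some a else s.lab v,
    fun v => if v = s.next then cs else s.succ v⟩

def init (n₀ : ℕ) : GB C F := ⟨n₀, fun _ => none, fun _ => []⟩

@[simp]
theorem alloc_next (s : GB C F) (a : C ⊕ F) (cs : List ℕ) : (s.alloc a cs).next = s.next + 1 :=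
  rfl

theorem alloc_lab (s : GB C F) (a : C ⊕ F) (cs : List ℕ) (v : ℕ) :
    (s.alloc a cs).lab v = if v = s.next then some a else s.lab v := rfl

theorem alloc_succ (s : GB C F) (a : C ⊕ F) (cs : List ℕ) (v : ℕ) :
    (s.alloc a cs).succ v = if v = s.next then cs else s.succ v := rfl

theorem reach_mono {s s' : GB C F} {root root' a b : ℕ} (hn : s.next ≤ s'.next)
    (hsucc : ∀ v < s.next, s'.succ v = s.succ v) (h : (s.graph root).Reach a b) :
    (s'.graph root').Reach a b := by
  induction h with
  | refl => exact .refl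
  | tail _ hbc ih =>
    have hb : _ < s.next := Finset.mem_range.1 hbc.1
    refine ih.tail ⟨Finset.mem_range.2 (hb.trans_le hn), ?_⟩
    show _ ∈ s'.succ _
    rw [hsucc _ hb]
    exact hbc.2

/-- Going from `s` to `s'`, the builder allocates the fresh nodes `[s.next, s'.next)` as a forest
whose leaves may point to the variable nodes `vm x`, which lie below `n₀`. -/
structure TreeExtension (n₀ : ℕ) (vars : List ℕ) (vm : ℕ → ℕ) (s s' : GB C F) :
    Prop where
  next_le : s.next ≤ s'.next
  stable : ∀ v, v < s.next ∨ s'.next ≤ v → s'.lab v = s.lab v ∧ s'.succ v = s.succ v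
  succ_fresh : ∀ v, s.next ≤ v → v < s'.next → ∀ w ∈ s'.succ v,
    w < v ∧ (s.next ≤ w ∨ w < n₀ ∧ ∃ x ∈ vars, w = vm x)
  parent_unique : ∀ u₁ (i₁ : ℕ) u₂ (i₂ : ℕ) w, s.next ≤ u₁ → u₁ < s'.next →
    s.next ≤ u₂ → u₂ < s'.next → s.next ≤ w → (s'.succ u₁)[i₁]? = some w →
    (s'.succ u₂)[i₂]? = some w → u₁ = u₂ ∧ i₁ = i₂

namespace TreeExtension

variable {n₀ : ℕ} {vm : ℕ → ℕ}

theorem refl (vars : List ℕ) (s : GB C F) : TreeExtension n₀ vars vm s s :=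
  ⟨le_rfl, fun _ _ => ⟨rfl, rfl⟩, fun _ h₁ h₂ => absurd h₂ (not_lt.2 h₁),
    fun _ _ _ _ _ h₁ h₂ => absurd h₂ (not_lt.2 h₁)⟩

theorem trans {A B AB : List ℕ} {s s₁ s₂ : GB C F} (h₁ : TreeExtension n₀ A vm s s₁)
    (h₂ : TreeExtension n₀ B vm s₁ s₂) (hn : n₀ ≤ s.next) (hA : A ⊆ AB)
    (hB : B ⊆ AB) :
    TreeExtension n₀ AB vm s s₂ := by
  have hle₁ := h₁.next_le
  have hle₂ := h₂.next_le
  refine ⟨hle₁.trans hle₂, fun v hv => ?_, fun v hv hv' w hw => ?_, ?_⟩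
  · have e₂ := h₂.stable v (by omega)
    have e₁ := h₁.stable v (by omega)
    exact ⟨e₂.1.trans e₁.1, e₂.2.trans e₁.2⟩
  · by_cases hv₁ : v < s₁.next
    · rw [(h₂.stable v (.inl hv₁)).2] at hw
      obtain ⟨hlt, hw | ⟨hwn, x, hx, rfl⟩⟩ := h₁.succ_fresh v hv hv₁ w hw
      · exact ⟨hlt, .inl hw⟩
      · exact ⟨hlt, .inr ⟨hwn, x, hA hx, rfl⟩⟩
    · obtain ⟨hlt, hw | ⟨hwn, x, hx, rfl⟩⟩ := h₂.succ_fresh v (by omega) hv' w hw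
      · exact ⟨hlt, .inl (by omega)⟩
      · exact ⟨hlt, .inr ⟨hwn, x, hB hx, rfl⟩⟩
  · intro u₁ i₁ u₂ i₂ w hu₁ hu₁' hu₂ hu₂' hw hs₁ hs₂
    have side : ∀ u (i : ℕ), s.next ≤ u → u < s₂.next → (s₂.succ u)[i]? = some w →
        (u < s₁.next ↔ w < s₁.next) := by
      intro u i hu hu' hg
      have hmem := List.mem_of_getElem? hg
      by_cases hu₁ : u < s₁.next
      · rw [(h₂.stable u (.inl hu₁)).2] at hmem
        have := (h₁.succ_fresh u hu hu₁ w hmem).1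
        omega
      · have := h₂.succ_fresh u (by omega) hu' w hmem
        omega
    by_cases hw₁ : w < s₁.next
    · have hu₁c := (side u₁ i₁ hu₁ hu₁' hs₁).2 hw₁
      have hu₂c := (side u₂ i₂ hu₂ hu₂' hs₂).2 hw₁
      rw [(h₂.stable u₁ (.inl hu₁c)).2] at hs₁
      rw [(h₂.stable u₂ (.inl hu₂c)).2] at hs₂
      exact h₁.parent_unique u₁ i₁ u₂ i₂ w hu₁ hu₁c hu₂ hu₂c hw hs₁ hs₂
    · have hu₁c := mt (side u₁ i₁ hu₁ hu₁' hs₁).1 hw₁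
      have hu₂c := mt (side u₂ i₂ hu₂ hu₂' hs₂).1 hw₁
      exact h₂.parent_unique u₁ i₁ u₂ i₂ w (by omega) hu₁' (by omega) hu₂' (by omega)
        hs₁ hs₂

theorem succ_lt {vars : List ℕ} {s : GB C F} (h : TreeExtension n₀ vars vm (init n₀) s) {a b : ℕ}
    (hb : b ∈ s.succ a) : b < a := by
  by_cases ha : a < n₀ ∨ s.next ≤ a
  · rw [(h.stable a ha).2] at hb
    cases hb
  · rw [not_or, not_lt, not_le] at ha
    exact (h.succ_fresh a ha.1 ha.2 b hb).1

theorem lab_eq_none {vars : List ℕ} {s : GB C F} (h : TreeExtension n₀ vars vm (init n₀) s)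
    {a : ℕ} (ha : a < n₀) : s.lab a = none :=
  (h.stable a (.inl ha)).1

end TreeExtension

end GB

section Builder

open GB

variable {C F : Type}

theorem buildT_var (vm : ℕ → ℕ) (x : ℕ) (s : GB C F) :
    buildT vm (.var x) s = (vm x, s) := by
  rw [buildT]

theorem buildT_con (vm : ℕ → ℕ) (c : C) (ts : List (GTerm C F)) (s : GB C F) :
    buildT vm (.con c ts) s =
      ((buildL vm ts s).2.next, (buildL vm ts s).2.alloc (.inl c) (buildL vm ts s).1) := by
  rw [buildT]; rfl

theorem buildT_fn (vm : ℕ → ℕ) (f : F) (ts : List (GTerm C F)) (s : GB C F) :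
    buildT vm (.fn f ts) s =
      ((buildL vm ts s).2.next, (buildL vm ts s).2.alloc (.inr f) (buildL vm ts s).1) := by
  rw [buildT]; rfl

theorem buildL_nil (vm : ℕ → ℕ) (s : GB C F) :
    buildL vm ([] : List (GTerm C F)) s = ([], s) := by
  rw [buildL]

theorem buildL_cons (vm : ℕ → ℕ) (t : GTerm C F) (ts : List (GTerm C F)) (s : GB C F) :
    buildL vm (t :: ts) s = ((buildT vm t s).1 :: (buildL vm ts (buildT vm t s).2).1,
      (buildL vm ts (buildT vm t s).2).2) := by
  rw [buildL]

structure BuildTSpec (n₀ : ℕ) (vm : ℕ → ℕ) (t : GTerm C F) (s : GB C F)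
    (res : ℕ × GB C F) : Prop where
  ext : TreeExtension n₀ t.varsL vm s res.2
  root_lt : res.1 < res.2.next
  root_cases : (∃ x, t = .var x ∧ res.1 = vm x ∧ res.2 = s) ∨
    (res.1 + 1 = res.2.next ∧ s.next ≤ res.1)
  reach_var : ∀ x ∈ t.varsL, (res.2.graph res.1).Reach res.1 (vm x)

structure BuildLSpec (n₀ : ℕ) (vm : ℕ → ℕ) (ts : List (GTerm C F)) (s : GB C F)
    (res : List ℕ × GB C F) : Prop where
  ext : TreeExtension n₀ (ts.flatMap GTerm.varsL) vm s res.2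
  roots : ∀ w ∈ res.1, w < res.2.next ∧
    (s.next ≤ w ∨ w < n₀ ∧ ∃ x ∈ ts.flatMap GTerm.varsL, w = vm x)
  root_not_child : ∀ w ∈ res.1, s.next ≤ w → ∀ u, s.next ≤ u → u < res.2.next →
    w ∉ res.2.succ u
  roots_nodup : ∀ (j₁ j₂ : ℕ) w, s.next ≤ w → res.1[j₁]? = some w →
    res.1[j₂]? = some w → j₁ = j₂
  reach_var : ∀ x ∈ ts.flatMap GTerm.varsL, ∃ w ∈ res.1, (res.2.graph w).Reach w (vm x)

variable {n₀ : ℕ} {vm : ℕ → ℕ}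

theorem BuildLSpec.le_of_mem_roots {ts : List (GTerm C F)} {s : GB C F}
    {res : List ℕ × GB C F} (S : BuildLSpec n₀ vm ts s res) {w : ℕ} (hw : w ∈ res.1)
    (hnw : n₀ ≤ w) : s.next ≤ w := by
  rcases (S.roots w hw).2 with h | ⟨h, _⟩
  · exact h
  · omega

theorem BuildLSpec.alloc {ts : List (GTerm C F)} {s : GB C F} {res : List ℕ × GB C F}
    (S : BuildLSpec n₀ vm ts s res) (a : C ⊕ F) {t : GTerm C F}
    (ht : t.varsL = ts.flatMap GTerm.varsL) :
    BuildTSpec n₀ vm t s (res.2.next, res.2.alloc a res.1) := by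
  have hle := S.ext.next_le
  refine ⟨⟨?_, fun v hv => ?_, fun v hv hv' w hw => ?_, ?_⟩, ?_, .inr ⟨rfl, hle⟩,
    fun x hx => ?_⟩
  · simp only [alloc_next]; omega
  · simp only [alloc_next] at hv
    rw [alloc_lab, alloc_succ, if_neg (by omega), if_neg (by omega)]
    exact S.ext.stable v (by omega)
  · rw [ht]
    simp only [alloc_next, alloc_succ] at hv' hw
    split_ifs at hw with hvm
    · obtain ⟨hlt, hc⟩ := S.roots w hw
      exact ⟨by omega, hc⟩
    · exact S.ext.succ_fresh v hv (by omega) w hw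
  · intro u₁ i₁ u₂ i₂ w hu₁ hu₁' hu₂ hu₂' hw hs₁ hs₂
    simp only [alloc_next, alloc_succ] at hu₁' hu₂' hs₁ hs₂
    split_ifs at hs₁ hs₂ with h₁ h₂ h₂
    · exact ⟨h₁.trans h₂.symm, S.roots_nodup i₁ i₂ w hw hs₁ hs₂⟩
    · exact absurd (List.mem_of_getElem? hs₂) (S.root_not_child w (List.mem_of_getElem? hs₁) hw
        u₂ hu₂ (by omega))
    · exact absurd (List.mem_of_getElem? hs₁) (S.root_not_child w (List.mem_of_getElem? hs₂) hw
        u₁ hu₁ (by omega))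
    · exact S.ext.parent_unique u₁ i₁ u₂ i₂ w hu₁ (by omega) hu₂ (by omega) hw
        hs₁ hs₂
  · simp
  · rw [ht] at hx
    obtain ⟨w, hw, hreach⟩ := S.reach_var x hx
    refine .head ⟨Finset.mem_range.2 (by simp), ?_⟩
      (reach_mono (by simp) (fun v hv => ?_) hreach)
    · show w ∈ (res.2.alloc a res.1).succ res.2.next
      rw [alloc_succ, if_pos rfl]
      exact hw
    · rw [alloc_succ, if_neg hv.ne]

theorem BuildTSpec.root_var_or_fresh {t : GTerm C F} {s : GB C F} {res : ℕ × GB C F}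
    (S : BuildTSpec n₀ vm t s res) (hvm : ∀ x ∈ t.varsL, vm x < n₀) :
    (res.1 < n₀ ∧ ∃ x ∈ t.varsL, res.1 = vm x) ∨ (res.1 + 1 = res.2.next ∧ s.next ≤ res.1) := by
  rcases S.root_cases with ⟨x, rfl, hx, -⟩ | h
  · exact .inl ⟨hx ▸ hvm x (by simp), x, by simp, hx⟩
  · exact .inr h

theorem BuildLSpec.cons {t : GTerm C F} {ts : List (GTerm C F)} {s : GB C F}
    {P : ℕ × GB C F} {Q : List ℕ × GB C F} (hn : n₀ ≤ s.next)
    (hvm : ∀ x ∈ t.varsL, vm x < n₀)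
    (S₁ : BuildTSpec n₀ vm t s P) (S₂ : BuildLSpec n₀ vm ts P.2 Q) :
    BuildLSpec n₀ vm (t :: ts) s (P.1 :: Q.1, Q.2) := by
  have hle₁ := S₁.ext.next_le
  have hle₂ := S₂.ext.next_le
  have hvars : ∀ {x}, x ∈ t.varsL ∨ x ∈ ts.flatMap GTerm.varsL →
      x ∈ (t :: ts).flatMap GTerm.varsL := by
    simp
  have hext := S₁.ext.trans S₂.ext hn (fun x hx => hvars (.inl hx)) (fun x hx => hvars (.inr hx))
  have hP := S₁.root_var_or_fresh hvm
  refine ⟨hext, ?_, ?_, ?_, ?_⟩ <;> dsimp only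
  · intro w hw
    rcases List.mem_cons.1 hw with rfl | hw
    · rcases hP with ⟨h₁, x, hx, he⟩ | ⟨h₁, h₂⟩
      · exact ⟨by omega, .inr ⟨h₁, x, hvars (.inl hx), he⟩⟩
      · exact ⟨by omega, .inl h₂⟩
    · obtain ⟨h₁, h | ⟨h, x, hx, he⟩⟩ := S₂.roots w hw
      · exact ⟨h₁, .inl (by omega)⟩
      · exact ⟨h₁, .inr ⟨h, x, hvars (.inr hx), he⟩⟩
  · intro w hw hsw u hu hu' hwu
    have hwu' := (hext.succ_fresh u hu hu' w hwu).1
    rcases List.mem_cons.1 hw with rfl | hw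
    · have := S₂.ext.succ_fresh u (by rcases hP with ⟨_, _⟩ | ⟨_, _⟩ <;> omega) hu' _ hwu
      rcases hP with ⟨_, _⟩ | ⟨_, _⟩ <;> omega
    · have hw₂ := S₂.le_of_mem_roots hw (by omega)
      exact S₂.root_not_child w hw hw₂ u (by omega) hu' hwu
  · intro j₁ j₂ w hsw h₁ h₂
    match j₁, j₂, h₁, h₂ with
    | 0, 0, _, _ => rfl
    | 0, j + 1, h₁, h₂ | j + 1, 0, h₂, h₁ =>
      simp only [List.getElem?_cons_zero, List.getElem?_cons_succ, Option.some.injEq] at h₁ h₂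
      have := S₂.le_of_mem_roots (List.mem_of_getElem? h₂) (by omega)
      rcases hP with ⟨_, _⟩ | ⟨_, _⟩ <;> omega
    | j₁ + 1, j₂ + 1, h₁, h₂ =>
      simp only [List.getElem?_cons_succ] at h₁ h₂
      have hw := S₂.le_of_mem_roots (List.mem_of_getElem? h₁) (by omega)
      have := S₂.roots_nodup j₁ j₂ w hw h₁ h₂
      omega
  · intro x hx
    simp only [List.flatMap_cons, List.mem_append] at hx
    rcases hx with hx | hx
    · exact ⟨P.1, List.mem_cons_self, reach_mono hle₂
        (fun v hv => (S₂.ext.stable v (.inl hv)).2) (S₁.reach_var x hx)⟩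
    · obtain ⟨w, hw, hr⟩ := S₂.reach_var x hx
      exact ⟨w, List.mem_cons_of_mem _ hw, hr⟩

mutual

theorem buildT_spec (t : GTerm C F) (s : GB C F) (hn : n₀ ≤ s.next)
    (hvm : ∀ x ∈ t.varsL, vm x < n₀) : BuildTSpec n₀ vm t s (buildT vm t s) := by
  cases t with
  | var x =>
    rw [buildT_var]
    have hx : vm x < n₀ := hvm x (by simp)
    exact ⟨.refl _ s, by simp only; omega, .inl ⟨x, rfl, rfl, rfl⟩,
      fun y hy => by simp only [GTerm.varsL_var, List.mem_singleton] at hy; exact hy ▸ .refl⟩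
  | con c ts =>
    rw [buildT_con]
    exact (buildL_spec ts s hn (by simpa using hvm)).alloc _ (GTerm.varsL_con c ts)
  | fn f ts =>
    rw [buildT_fn]
    exact (buildL_spec ts s hn (by simpa using hvm)).alloc _ (GTerm.varsL_fn f ts)

theorem buildL_spec (ts : List (GTerm C F)) (s : GB C F) (hn : n₀ ≤ s.next)
    (hvm : ∀ x ∈ ts.flatMap GTerm.varsL, vm x < n₀) :
    BuildLSpec n₀ vm ts s (buildL vm ts s) := by
  cases ts with
  | nil =>
    rw [buildL_nil]
    exact ⟨.refl _ s, by simp, by simp, by simp, by simp⟩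
  | cons t ts =>
    rw [buildL_cons]
    simp only [List.flatMap_cons, List.mem_append] at hvm
    have S₁ := buildT_spec t s hn fun x hx => hvm x (.inl hx)
    exact .cons hn (fun x hx => hvm x (.inl hx)) S₁
      (buildL_spec ts _ (hn.trans S₁.ext.next_le) fun x hx => hvm x (.inr hx))

end

end Builder

section TreeGraph

variable {C F : Type}

theorem constructorShared_graphOfTerm (t : GTerm C F) (ht : GClosed t) :
    (graphOfTerm t).ConstructorShared := by
  have hvars : t.varsL = [] := ht
  set n₀ := t.varsL.dedup.length
  set res := buildT (fun x => t.varsL.dedup.idxOf x) t (GB.init n₀)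
  have hn₀ : n₀ = 0 := by simp [n₀, hvars]
  obtain ⟨hext, hroot_lt, hroot_cases, -⟩ : BuildTSpec n₀ _ t (GB.init n₀) res :=
    buildT_spec t (GB.init n₀) le_rfl (by simp [hvars])
  have hroot : res.1 + 1 = res.2.next := by
    rcases hroot_cases with ⟨x, rfl, -⟩ | ⟨h, -⟩
    · simp at hvars
    · exact h
  change (res.2.graph res.1).ConstructorShared
  have hV : ∀ v, v ∈ (res.2.graph res.1).V ↔ v < res.2.next := fun _ => Finset.mem_range
  refine TGraph.constructorShared_of_isTree ((hV _).2 hroot_lt)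
    (fun v hv w hw => (hV w).2 ((hext.succ_lt hw).trans ((hV v).1 hv)))
    (fun u hu hr => ?_) (fun u₁ hu₁ u₂ hu₂ i j v hi hj => ?_)
  · have := hext.succ_lt (a := u) (b := res.1) hr
    have := (hV u).1 hu
    omega
  · exact hext.parent_unique u₁ i u₂ j v (by simp [GB.init, hn₀]) ((hV u₁).1 hu₁)
      (by simp [GB.init, hn₀]) ((hV u₂).1 hu₂) (by simp [GB.init, hn₀]) hi hj

end TreeGraph

section RuleGraph

variable {C F : Type}

/-- The shape of the graph of a constructor rule with left root `l` and right root `r`: the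
left-hand side lies below `m`, and the nodes `[m, N)` are the right-hand side proper, a tree
whose leaves may point to the (unlabelled) variable nodes of the left-hand side. -/
structure RuleShape (H : TGraph C F) (l r m N : ℕ) : Prop where
  V_eq : H.V = Finset.range N
  lab_left : ∃ f, H.lab l = some (Sum.inr f)
  lt_of_reach_left : ∀ v, H.Reach l v → v < m
  right_cases : (H.Reach l r ∧ H.lab r = none) ∨ (m ≤ r ∧ r + 1 = N)
  succ_fresh : ∀ v, m ≤ v → v < N → ∀ w ∈ H.succ v,
    w < v ∧ (m ≤ w ∨ H.Reach l w ∧ H.lab w = none)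
  parent_unique : ∀ u₁ (i₁ : ℕ) u₂ (i₂ : ℕ) w, m ≤ u₁ → u₁ < N → m ≤ u₂ → u₂ < N →
    m ≤ w → (H.succ u₁)[i₁]? = some w → (H.succ u₂)[i₂]? = some w → u₁ = u₂ ∧ i₁ = i₂

theorem ruleGraph_shape (r : GRule C F)
    (hr : ∀ x ∈ r.rhs.varsL, x ∈ r.args.flatMap GTerm.varsL) :
    ∃ m N, RuleShape (ruleGraph r).1 (ruleGraph r).2.1 (ruleGraph r).2.2 m N := by
  set lhs : GTerm C F := .fn r.f r.args
  set vs := lhs.varsL.dedup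
  set vm : ℕ → ℕ := fun x => vs.idxOf x
  set s₀ : GB C F := GB.init vs.length
  set P := buildT vm lhs s₀
  set Q := buildT vm r.rhs P.2
  change ∃ m N, RuleShape (Q.2.graph P.1) P.1 Q.1 m N
  have hrl : r.rhs.varsL ⊆ lhs.varsL := fun x hx => by simpa [lhs] using hr x hx
  have hvm : ∀ x ∈ lhs.varsL, vm x < vs.length := fun x hx =>
    List.idxOf_lt_length_iff.2 (List.mem_dedup.2 hx)
  have SP : BuildTSpec vs.length vm lhs s₀ P := buildT_spec lhs s₀ le_rfl hvm
  have SQ : BuildTSpec vs.length vm r.rhs P.2 Q :=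
    buildT_spec r.rhs P.2 SP.ext.next_le fun x hx => hvm x (hrl hx)
  have hext := SP.ext.trans SQ.ext le_rfl (List.Subset.refl _) hrl
  have hP : P.1 + 1 = P.2.next := by
    rcases SP.root_cases with ⟨x, hx, -⟩ | ⟨h, -⟩
    · simp [lhs] at hx
    · exact h
  have hvar : ∀ x ∈ r.rhs.varsL, (Q.2.graph P.1).Reach P.1 (vm x) ∧ Q.2.lab (vm x) = none :=
    fun x hx => ⟨GB.reach_mono SQ.ext.next_le (fun v hv => (SQ.ext.stable v (.inl hv)).2)
        (SP.reach_var x (hrl hx)),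
      hext.lab_eq_none (hvm x (hrl hx))⟩
  refine ⟨P.2.next, Q.2.next, rfl, ⟨r.f, ?_⟩, fun v hv => ?_, ?_, fun v hv hv' w hw => ?_,
    SQ.ext.parent_unique⟩
  · change Q.2.lab P.1 = _
    rw [(SQ.ext.stable P.1 (.inl (by omega))).1]
    simp only [P, lhs, buildT_fn, GB.alloc_lab, if_pos]
  · have := TGraph.le_of_reach (fun a _ b hb => hext.succ_lt hb) hv
    omega
  · rcases SQ.root_cases with ⟨x, hrhs, hx, -⟩ | ⟨h₁, h₂⟩
    · exact .inl (hx ▸ hvar x (by simp [*]))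
    · exact .inr ⟨h₂, h₁⟩
  · obtain ⟨hlt, h | ⟨-, x, hx, rfl⟩⟩ := SQ.ext.succ_fresh v hv hv' w hw
    · exact ⟨hlt, .inl h⟩
    · exact ⟨hlt, .inr (hvar x hx)⟩

theorem RuleShape.fresh_of_reach_right {H : TGraph C F} {l r m N : ℕ}
    (hs : RuleShape H l r m N) {c : ℕ} (hrc : H.Reach r c)
    (hlc : ¬ H.Reach l c) : m ≤ c ∧ c < N := by
  rcases hs.right_cases with ⟨hlr, -⟩ | ⟨hr, hrN⟩
  · exact absurd (hlr.trans hrc) hlc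
  induction hrc with
  | refl => omega
  | tail hrb hbc ih =>
    obtain ⟨hb, hb'⟩ := ih fun h => hlc (h.tail hbc)
    obtain ⟨hlt, h | ⟨h, -⟩⟩ := hs.succ_fresh _ hb hb' _ hbc.2
    · omega
    · exact absurd h hlc

end RuleGraph

namespace TGraph

variable {C F : Type}

def freshOffset (G : TGraph C F) : ℕ := G.V.sup id + 1

noncomputable def copyMap (G H : TGraph C F) (l : ℕ) (φ : ℕ → ℕ) (v : ℕ) : ℕ :=
  if H.Reach l v then φ v else v + G.freshOffset

noncomputable def redirect (G H : TGraph C F) (l r : ℕ) (φ : ℕ → ℕ) (w : ℕ) : ℕ :=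
  if w = φ l then copyMap G H l φ r else w

noncomputable def copies (G H : TGraph C F) (l r : ℕ) : Finset ℕ :=
  (H.V.filter fun v => H.Reach r v ∧ ¬ H.Reach l v).image (· + G.freshOffset)

variable {G H : TGraph C F} {l r m N : ℕ} {φ : ℕ → ℕ}

theorem fire_lab (v : ℕ) : (fire G H l r φ).lab v =
    if v ∈ copies G H l r then H.lab (v - G.freshOffset) else G.lab v := rfl

theorem fire_succ (v : ℕ) : (fire G H l r φ).succ v =
    if v ∈ copies G H l r then
      ((H.succ (v - G.freshOffset)).map (copyMap G H l φ)).map (redirect G H l r φ)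
    else (G.succ v).map (redirect G H l r φ) := rfl

theorem fire_root : (fire G H l r φ).root = redirect G H l r φ G.root := rfl

theorem lt_freshOffset {v : ℕ} (hv : v ∈ G.V) : v < G.freshOffset :=
  Nat.lt_succ_of_le (Finset.le_sup (f := id) hv)

theorem mem_copies {w : ℕ} : w ∈ copies G H l r ↔
    ∃ c, c ∈ H.V ∧ H.Reach r c ∧ ¬ H.Reach l c ∧ c + G.freshOffset = w := by
  simp [copies, and_assoc]

theorem not_mem_copies {v : ℕ} (hv : v ∈ G.V) : v ∉ copies G H l r := by
  rw [mem_copies]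
  rintro ⟨c, -, -, -, rfl⟩
  have := lt_freshOffset hv
  omega

theorem fire_succ_of_not_mem_copies {v : ℕ} (hv : v ∉ copies G H l r) :
    (fire G H l r φ).succ v = (G.succ v).map (redirect G H l r φ) := by
  rw [fire_succ, if_neg hv]

/-- Outside the image of the left root, redirection is the identity, so a constructor cone of `G`
survives the firing untouched. -/
theorem constructorCone_fire (hsucc : ∀ v ∈ G.V, ∀ w ∈ G.succ v, w ∈ G.V)
    (hl : ¬ G.ConstructorCone (φ l)) {v : ℕ} (hv : v ∈ G.V) (hc : G.ConstructorCone v) :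
    (fire G H l r φ).ConstructorCone v := by
  suffices h : ∀ w, (fire G H l r φ).Reach v w → w ∈ G.V ∧ G.Reach v w by
    intro w hw
    obtain ⟨hwV, hvw⟩ := h w hw
    rw [fire_lab, if_neg (not_mem_copies hwV)]
    exact hc w hvw
  intro w hw
  induction hw with
  | refl => exact ⟨hv, .refl⟩
  | tail _ hbc ih =>
    obtain ⟨hbV, hvb⟩ := ih
    obtain ⟨-, hmem⟩ := hbc
    rw [fire_succ_of_not_mem_copies (not_mem_copies hbV)] at hmem
    obtain ⟨w, hw, rfl⟩ := List.mem_map.1 hmem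
    have hvw : G.Reach v w := hvb.tail ⟨hbV, hw⟩
    have hwl : w ≠ φ l := fun h => hl (h ▸ hc.of_reach hvw)
    rw [redirect, if_neg hwl]
    exact ⟨hsucc _ hbV w hw, hvw⟩

theorem IsRedex.not_constructorCone_left (hs : RuleShape H l r m N) (hφ : IsRedex H l G φ) :
    ¬ G.ConstructorCone (φ l) := fun hc => by
  obtain ⟨f, hf⟩ := hs.lab_left
  obtain ⟨c, hc⟩ := hc (φ l) .refl
  rw [((hφ.1 l .refl).2 _ hf).1] at hc
  cases hc

theorem IsRedex.constructorCone_fire_var (hsucc : ∀ v ∈ G.V, ∀ w ∈ G.succ v, w ∈ G.V)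
    (hs : RuleShape H l r m N) (hφ : IsRedex H l G φ) {v : ℕ} (hv : H.Reach l v)
    (hvl : H.lab v = none) : φ v ∈ G.V ∧ (fire G H l r φ).ConstructorCone (φ v) :=
  ⟨(hφ.1 v hv).1, constructorCone_fire hsucc (hφ.not_constructorCone_left hs) (hφ.1 v hv).1
    (hφ.2 v hv hvl)⟩

theorem copyMap_right_cases (hsucc : ∀ v ∈ G.V, ∀ w ∈ G.succ v, w ∈ G.V)
    (hs : RuleShape H l r m N) (hφ : IsRedex H l G φ) :
    (copyMap G H l φ r ∈ G.V ∧ (fire G H l r φ).ConstructorCone (copyMap G H l φ r)) ∨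
      (copyMap G H l φ r = r + G.freshOffset ∧ copyMap G H l φ r ∈ copies G H l r) := by
  by_cases hlr : H.Reach l r
  · rw [copyMap, if_pos hlr]
    rcases hs.right_cases with ⟨-, hrl⟩ | ⟨hmr, -⟩
    · exact .inl (hφ.constructorCone_fire_var hsucc hs hlr hrl)
    · exact absurd (hs.lt_of_reach_left r hlr) (not_lt.2 hmr)
  · rw [copyMap, if_neg hlr]
    rcases hs.right_cases with ⟨h, -⟩ | ⟨-, hrN⟩
    · exact absurd h hlr
    refine .inr ⟨rfl, mem_copies.2 ⟨r, ?_, .refl, hlr, rfl⟩⟩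
    rw [hs.V_eq, Finset.mem_range]
    omega

theorem fire_child_of_mem_copies (hsucc : ∀ v ∈ G.V, ∀ w ∈ G.succ v, w ∈ G.V)
    (hs : RuleShape H l r m N) (hφ : IsRedex H l G φ) {u v : ℕ} {i : ℕ}
    (hu : u ∈ copies G H l r) (he : ((fire G H l r φ).succ u)[i]? = some v) :
    (v ∈ G.V ∧ (fire G H l r φ).ConstructorCone v) ∨
      (v ∈ copies G H l r ∧ ∃ c w, u = c + G.freshOffset ∧ v = w + G.freshOffset ∧
        (H.succ c)[i]? = some w ∧ m ≤ c ∧ c < N ∧ m ≤ w ∧ w < r) := by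
  have hu' := hu
  obtain ⟨c, hcV, hrc, hlc, rfl⟩ := mem_copies.1 hu'
  obtain ⟨hmc, hcN⟩ := hs.fresh_of_reach_right hrc hlc
  have hrN : r + 1 = N := by
    rcases hs.right_cases with ⟨hlr, -⟩ | ⟨-, h⟩
    · exact absurd (hlr.trans hrc) hlc
    · exact h
  rw [fire_succ, if_pos hu, Nat.add_sub_cancel, List.getElem?_map, List.getElem?_map] at he
  obtain ⟨w, hw, rfl⟩ : ∃ w, (H.succ c)[i]? = some w ∧
      redirect G H l r φ (copyMap G H l φ w) = v := by
    cases h : (H.succ c)[i]? <;> simp_all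
  have hφl := lt_freshOffset (hφ.1 l .refl).1
  obtain ⟨hwc, hmw | ⟨hlw, hwl⟩⟩ := hs.succ_fresh c hmc hcN w (List.mem_of_getElem? hw)
  · have hlw : ¬ H.Reach l w := fun h => absurd (hs.lt_of_reach_left w h) (not_lt.2 hmw)
    rw [copyMap, if_neg hlw, redirect, if_neg (by omega)]
    refine .inr ⟨mem_copies.2 ⟨w, ?_, hrc.tail ⟨hcV, List.mem_of_getElem? hw⟩, hlw, rfl⟩,
      c, w, rfl, rfl, hw, hmc, hcN, hmw, by omega⟩
    rw [hs.V_eq, Finset.mem_range]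
    omega
  · obtain ⟨hwV, hwc⟩ := hφ.constructorCone_fire_var hsucc hs hlw hwl
    have hne : φ w ≠ φ l := fun h =>
      hφ.not_constructorCone_left hs (h ▸ hφ.2 w hlw hwl)
    rw [copyMap, if_pos hlw, redirect, if_neg hne]
    exact .inl ⟨hwV, hwc⟩

theorem fire_child_of_not_mem_copies {u v : ℕ} {i : ℕ} (hu : u ∉ copies G H l r)
    (he : ((fire G H l r φ).succ u)[i]? = some v) :
    ((G.succ u)[i]? = some v ∧ v ≠ φ l) ∨
      ((G.succ u)[i]? = some (φ l) ∧ v = copyMap G H l φ r) := by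
  rw [fire_succ_of_not_mem_copies hu, List.getElem?_map] at he
  obtain ⟨w, hw, rfl⟩ : ∃ w, (G.succ u)[i]? = some w ∧ redirect G H l r φ w = v := by
    cases h : (G.succ u)[i]? <;> simp_all
  unfold redirect
  split_ifs with hwl
  · exact .inr ⟨hwl ▸ hw, rfl⟩
  · exact .inl ⟨hw, hwl⟩

theorem fire_succ_mem_union (hsucc : ∀ v ∈ G.V, ∀ w ∈ G.succ v, w ∈ G.V)
    (hs : RuleShape H l r m N) (hφ : IsRedex H l G φ) {u w : ℕ}
    (hu : u ∈ G.V ∪ copies G H l r) (hw : w ∈ (fire G H l r φ).succ u) :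
    w ∈ G.V ∪ copies G H l r := by
  obtain ⟨i, he⟩ := List.mem_iff_getElem?.1 hw
  rw [Finset.mem_union]
  by_cases huc : u ∈ copies G H l r
  · rcases fire_child_of_mem_copies hsucc hs hφ huc he with ⟨hwV, -⟩ | ⟨hwc, -⟩
    · exact .inl hwV
    · exact .inr hwc
  have huV : u ∈ G.V := (Finset.mem_union.1 hu).resolve_right huc
  rcases fire_child_of_not_mem_copies huc he with ⟨hi, -⟩ | ⟨-, rfl⟩
  · exact .inl (hsucc u huV w (List.mem_of_getElem? hi))
  · rcases copyMap_right_cases hsucc hs hφ with ⟨h, -⟩ | ⟨-, h⟩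
    · exact .inl h
    · exact .inr h

theorem fire_root_cases (G H : TGraph C F) (l r : ℕ) (φ : ℕ → ℕ) :
    (fire G H l r φ).root = G.root ∨
      (fire G H l r φ).root = copyMap G H l φ r ∧ G.root = φ l := by
  rw [fire_root, redirect]
  split_ifs with h
  · exact .inr ⟨rfl, h⟩
  · exact .inl rfl

theorem fire_root_mem_or (hroot : G.root ∈ G.V) :
    (fire G H l r φ).root ∈ G.V ∨ (fire G H l r φ).root = copyMap G H l φ r := by
  rcases fire_root_cases G H l r φ with h | ⟨h, -⟩ <;> rw [h]
  exacts [.inl hroot, .inr rfl]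

theorem fire_root_mem (hroot : G.root ∈ G.V)
    (hsucc : ∀ v ∈ G.V, ∀ w ∈ G.succ v, w ∈ G.V)
    (hs : RuleShape H l r m N) (hφ : IsRedex H l G φ) :
    (fire G H l r φ).root ∈ (fire G H l r φ).V := by
  refine Finset.mem_filter.2 ⟨?_, .refl⟩
  rw [Finset.mem_union]
  rcases fire_root_mem_or (H := H) (l := l) (r := r) (φ := φ) hroot with h | h
  · exact .inl h
  · rcases copyMap_right_cases hsucc hs hφ with ⟨h', -⟩ | ⟨-, h'⟩ <;> rw [h]
    exacts [.inl h', .inr h']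

theorem mem_union_of_mem_fire {v : ℕ} (hv : v ∈ (fire G H l r φ).V) :
    v ∈ G.V ∪ copies G H l r :=
  (Finset.mem_filter.1 hv).1

theorem fire_succ_mem (hsucc : ∀ v ∈ G.V, ∀ w ∈ G.succ v, w ∈ G.V)
    (hs : RuleShape H l r m N) (hφ : IsRedex H l G φ) :
    ∀ u ∈ (fire G H l r φ).V, ∀ w ∈ (fire G H l r φ).succ u, w ∈ (fire G H l r φ).V := by
  intro u hu w hw
  obtain ⟨hu₁, hu₂⟩ := Finset.mem_filter.1 hu
  exact Finset.mem_filter.2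
    ⟨fire_succ_mem_union hsucc hs hφ hu₁ hw, hu₂.tail ⟨hu₁, hw⟩⟩

theorem ne_copyMap_of_not_constructorCone (hsucc : ∀ v ∈ G.V, ∀ w ∈ G.succ v, w ∈ G.V)
    (hs : RuleShape H l r m N) (hφ : IsRedex H l G φ) {v : ℕ} (hv : v ∈ G.V)
    (hnc : ¬ (fire G H l r φ).ConstructorCone v) : v ≠ copyMap G H l φ r := by
  rintro rfl
  rcases copyMap_right_cases hsucc hs hφ with ⟨-, h⟩ | ⟨-, h⟩
  · exact hnc h
  · exact not_mem_copies hv h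

/-- Fresh copies other than the copy of the right root are entered only from copies. -/
theorem follow_of_follow_fire (hroot : G.root ∈ G.V)
    (hsucc : ∀ v ∈ G.V, ∀ w ∈ G.succ v, w ∈ G.V)
    (hs : RuleShape H l r m N) (hφ : IsRedex H l G φ) {p : List ℕ} {v : ℕ}
    (hnc : ¬ (fire G H l r φ).ConstructorCone v) (hv : v ∈ G.V ∨ v = copyMap G H l φ r)
    (hp : (fire G H l r φ).follow (fire G H l r φ).root p = some v) :
    (v ∈ G.V ∧ G.follow G.root p = some v) ∨
      (v = copyMap G H l φ r ∧ G.follow G.root p = some (φ l)) := by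
  induction p using List.reverseRecOn generalizing v with
  | nil =>
    cases hp
    rcases fire_root_cases G H l r φ with h | ⟨h, hrl⟩ <;> rw [h]
    · exact .inl ⟨hroot, rfl⟩
    · exact .inr ⟨rfl, congrArg some hrl⟩
  | append_singleton p i ih =>
    obtain ⟨u, hu, he⟩ := follow_append_singleton_eq_some.1 hp
    have huV := follow_mem (fire_succ_mem hsucc hs hφ) (fire_root_mem hroot hsucc hs hφ) hu
    have hunc : ¬ (fire G H l r φ).ConstructorCone u := fun h =>
      hnc (h.of_succ huV (List.mem_of_getElem? he))
    by_cases huc : u ∈ copies G H l r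
    · exfalso
      rcases fire_child_of_mem_copies hsucc hs hφ huc he with
        ⟨-, h⟩ | ⟨hvc, c, w, -, rfl, -, -, -, -, hwr⟩
      · exact hnc h
      rcases hv with hv | hv
      · exact not_mem_copies hv hvc
      rcases copyMap_right_cases hsucc hs hφ with ⟨h, -⟩ | ⟨h, -⟩
      · exact not_mem_copies (hv ▸ h) hvc
      · omega
    have huG : u ∈ G.V := (Finset.mem_union.1 (mem_union_of_mem_fire huV)).resolve_right huc
    obtain ⟨-, hpu⟩ := (ih hunc (.inl huG) hu).resolve_right fun h =>
      ne_copyMap_of_not_constructorCone hsucc hs hφ huG hunc h.1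
    rcases fire_child_of_not_mem_copies huc he with ⟨hi, -⟩ | ⟨hi, rfl⟩
    · exact .inl ⟨hsucc u huG v (List.mem_of_getElem? hi),
        follow_append_singleton_eq_some.2 ⟨u, hpu, hi⟩⟩
    · exact .inr ⟨rfl, follow_append_singleton_eq_some.2 ⟨u, hpu, hi⟩⟩

theorem eq_of_follow_fire (hroot : G.root ∈ G.V)
    (hsucc : ∀ v ∈ G.V, ∀ w ∈ G.succ v, w ∈ G.V)
    (hcs : G.ConstructorShared) (hs : RuleShape H l r m N) (hφ : IsRedex H l G φ)
    {p q : List ℕ} {v : ℕ} (hnc : ¬ (fire G H l r φ).ConstructorCone v)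
    (hv : v ∈ G.V ∨ v = copyMap G H l φ r)
    (hp : (fire G H l r φ).follow (fire G H l r φ).root p = some v)
    (hq : (fire G H l r φ).follow (fire G H l r φ).root q = some v) : p = q := by
  by_contra hpq
  have hne : v ∈ G.V → v ≠ copyMap G H l φ r := fun hvG =>
    ne_copyMap_of_not_constructorCone hsucc hs hφ hvG hnc
  rcases follow_of_follow_fire hroot hsucc hs hφ hnc hv hp with ⟨hvG, hp'⟩ | ⟨hvt, hp'⟩ <;>
    rcases follow_of_follow_fire hroot hsucc hs hφ hnc hv hq with ⟨hvG', hq'⟩ | ⟨hvt', hq'⟩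
  · exact hnc (constructorCone_fire hsucc (hφ.not_constructorCone_left hs) hvG
      (hcs v p q hp' hq' hpq))
  · exact hne hvG hvt'
  · exact hne hvG' hvt
  · exact hφ.not_constructorCone_left hs (hcs (φ l) p q hp' hq' hpq)

theorem fire_parent_of_mem_copies (hsucc : ∀ v ∈ G.V, ∀ w ∈ G.succ v, w ∈ G.V)
    (hs : RuleShape H l r m N) (hφ : IsRedex H l G φ) {u v : ℕ} {i : ℕ}
    (hu : u ∈ G.V ∪ copies G H l r) (he : ((fire G H l r φ).succ u)[i]? = some v)
    (hv : v ∈ copies G H l r) (hvt : v ≠ copyMap G H l φ r) :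
    ∃ c w, u = c + G.freshOffset ∧ v = w + G.freshOffset ∧ (H.succ c)[i]? = some w ∧
      m ≤ c ∧ c < N ∧ m ≤ w := by
  by_cases huc : u ∈ copies G H l r
  · rcases fire_child_of_mem_copies hsucc hs hφ huc he with ⟨hvG, -⟩ |
      ⟨-, c, w, hu, hv, hi, hmc, hcN, hmw, -⟩
    · exact absurd hv (not_mem_copies hvG)
    · exact ⟨c, w, hu, hv, hi, hmc, hcN, hmw⟩
  have huG : u ∈ G.V := (Finset.mem_union.1 hu).resolve_right huc
  rcases fire_child_of_not_mem_copies huc he with ⟨hi, -⟩ | ⟨-, h⟩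
  · exact absurd hv (not_mem_copies (hsucc u huG v (List.mem_of_getElem? hi)))
  · exact absurd h hvt

theorem constructorShared_fire (hroot : G.root ∈ G.V)
    (hsucc : ∀ v ∈ G.V, ∀ w ∈ G.succ v, w ∈ G.V) (hcs : G.ConstructorShared)
    (hs : RuleShape H l r m N) (hφ : IsRedex H l G φ) :
    (fire G H l r φ).ConstructorShared := by
  have hrootI := fire_root_mem hroot hsucc hs hφ
  have hsuccI := fire_succ_mem hsucc hs hφ
  refine constructorShared_of_parents hrootI hsuccI (fun p u i hp _ hi => ?_)
    (fun p q u₁ u₂ i j v hp hq hu₁ hu₂ hi hj hnc => ?_)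
  · by_contra hnc
    exact List.append_ne_nil_of_right_ne_nil p (List.cons_ne_nil i [])
      (eq_of_follow_fire hroot hsucc hcs hs hφ hnc (fire_root_mem_or hroot)
        (follow_append_singleton_eq_some.2 ⟨u, hp, hi⟩) rfl)
  by_cases hv : v ∈ G.V ∨ v = copyMap G H l φ r
  · exact .inr (eq_of_follow_fire hroot hsucc hcs hs hφ hnc hv
      (follow_append_singleton_eq_some.2 ⟨u₁, hp, hi⟩)
      (follow_append_singleton_eq_some.2 ⟨u₂, hq, hj⟩))
  rw [not_or] at hv
  have hvI := hsuccI u₁ hu₁ v (List.mem_of_getElem? hi)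
  have hvc : v ∈ copies G H l r :=
    (Finset.mem_union.1 (mem_union_of_mem_fire hvI)).resolve_left hv.1
  obtain ⟨c₁, w₁, rfl, rfl, hi', hmc₁, hc₁N, hmw⟩ := fire_parent_of_mem_copies hsucc hs hφ
    (mem_union_of_mem_fire hu₁) hi hvc hv.2
  obtain ⟨c₂, w₂, rfl, hw, hj', hmc₂, hc₂N, -⟩ := fire_parent_of_mem_copies hsucc hs hφ
    (mem_union_of_mem_fire hu₂) hj hvc hv.2
  obtain rfl : w₁ = w₂ := by omega
  obtain ⟨rfl, rfl⟩ :=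
    hs.parent_unique c₁ i c₂ j w₁ hmc₁ hc₁N hmc₂ hc₂N hmw hi' hj'
  exact .inl ⟨rfl, rfl⟩

end TGraph

/-- For every closed term t of an orthogonal constructor rewrite system, the tree
term graph 𝔾(t) is constructor-shared; moreover constructor-sharedness of closed
well-formed term graphs is preserved by one-step graph rewriting in the graph
rewrite system corresponding to the term rewrite system. -/
theorem constructor_sharedness {C F : Type} (arc : C → ℕ) (arf : F → ℕ)
    (Rs : Set (GRule C F)) (horth : Orthogonal arc arf Rs) :
    (∀ t : GTerm C F, GClosed t → GTerm.WFT arc arf t →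
      TGraph.ConstructorShared (graphOfTerm t)) ∧
    (∀ G I : TGraph C F, TGraph.WFG arc arf G → TGraph.ClosedG G →
      TGraph.ConstructorShared G → GStep Rs G I → TGraph.ConstructorShared I) := by
  refine ⟨fun t ht _ => constructorShared_graphOfTerm t ht, ?_⟩
  rintro G I hG - hcs ⟨hr, hφ⟩
  obtain ⟨m, N, hs⟩ := ruleGraph_shape _ (horth.1 _ hr).2.2.2.2.2
  exact TGraph.constructorShared_fire hG.root_mem hG.succ_mem hcs hs hφ
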